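/- arXiv:1811.10994 — 4 statements merged into one kernel-verified Lean document; each statement's English description precedes it below -/
import Mathlib

section
/- Let c₂, c₃, c₄ be real constants with c₄ ≥ 0, and let f : ℝ → ℝ be differentiable. Define F(ξ) = (4·f(ξ)² − c₂)/(c₃ − 4·√c₄·f(ξ)) wherever the denominator is nonzero. Then the algebraic identity (F′)² − c₂F² − c₃F³ − c₄F⁴ = 16·(f′ − f² + c₂/4)·(f′ + f² − c₂/4)·H(f)/(4√c₄·f − c₃)⁴ holds at every point where c₃ − 4√c₄·f ≠ 0, where H(f) = 16c₄f⁴ − 16c₃√c₄·f³ + (4c₃² + 8c₂c₄)f² − 4c₂c₃√c₄·f + c₂²c₄. In particular, if f satisfies the Riccati equation f′ = f² − c₂/4, then F satisfies (F′)² = c₂F² + c₃F³ + c₄F⁴. -/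
/-!
With `s = √c₄`, the quotient rule gives `F' = f' · R(f) / Q(f)²` for `Q(u) = c₃ - 4su` and an explicit
quadratic `R`, so `(F')² - c₂F² - c₃F³ - c₄F⁴` is a rational function of `f` and `f'` with denominator `Q(f)⁴`.
Its numerator is quadratic in `f'` with roots `f' = ±(f² - c₂/4)`, which gives the factorisation; the Riccati
equation kills the first factor.
-/

lemma hasDerivAt_quadratic_div_linear {f : ℝ → ℝ} {f' x : ℝ} (c₂ c₃ s : ℝ)
    (hf : HasDerivAt f f' x) (hQ : c₃ - 4 * s * f x ≠ 0) :
    HasDerivAt (fun y => (4 * f y ^ 2 - c₂) / (c₃ - 4 * s * f y))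
      (f' * (8 * f x * (c₃ - 4 * s * f x) + 4 * s * (4 * f x ^ 2 - c₂)) /
        (c₃ - 4 * s * f x) ^ 2) x := by
  have hP : HasDerivAt (fun y => 4 * f y ^ 2 - c₂) (8 * f x * f') x :=
    (((hf.fun_pow 2).const_mul 4).sub_const c₂).congr_deriv (by push_cast; ring)
  have hQ' : HasDerivAt (fun y => c₃ - 4 * s * f y) (-(4 * s * f')) x :=
    (hf.const_mul (4 * s)).const_sub c₃
  exact (hP.fun_div hQ' hQ).congr_deriv (by ring)

lemma elliptic_defect_eq {c₂ c₃ c₄ s : ℝ} (hs : s ^ 2 = c₄) (u v : ℝ)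
    (hQ : c₃ - 4 * s * u ≠ 0) :
    let F := (4 * u ^ 2 - c₂) / (c₃ - 4 * s * u)
    let F' := v * (8 * u * (c₃ - 4 * s * u) + 4 * s * (4 * u ^ 2 - c₂)) / (c₃ - 4 * s * u) ^ 2
    F' ^ 2 - c₂ * F ^ 2 - c₃ * F ^ 3 - c₄ * F ^ 4 =
      16 * (v - u ^ 2 + c₂ / 4) * (v + u ^ 2 - c₂ / 4) *
        (16 * c₄ * u ^ 4 - 16 * c₃ * s * u ^ 3 + (4 * c₃ ^ 2 + 8 * c₂ * c₄) * u ^ 2 -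
          4 * c₂ * c₃ * s * u + c₂ ^ 2 * c₄) / (4 * s * u - c₃) ^ 4 := by
  have hQ' : 4 * s * u - c₃ ≠ 0 := fun h => hQ (by linarith)
  subst hs
  dsimp only
  field_simp
  ring

theorem stmt_12 (c₂ c₃ c₄ : ℝ) (hc₄ : 0 ≤ c₄) (f : ℝ → ℝ)
    (hf : Differentiable ℝ f) (F : ℝ → ℝ)
    (hF : ∀ ξ, F ξ = (4 * (f ξ)^2 - c₂) / (c₃ - 4 * Real.sqrt c₄ * f ξ)) :
    (∀ ξ, c₃ - 4 * Real.sqrt c₄ * f ξ ≠ 0 →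
      (deriv F ξ)^2 - c₂ * (F ξ)^2 - c₃ * (F ξ)^3 - c₄ * (F ξ)^4 =
        16 * (deriv f ξ - (f ξ)^2 + c₂/4) * (deriv f ξ + (f ξ)^2 - c₂/4) *
          (16 * c₄ * (f ξ)^4 - 16 * c₃ * Real.sqrt c₄ * (f ξ)^3 +
            (4 * c₃^2 + 8 * c₂ * c₄) * (f ξ)^2 -
            4 * c₂ * c₃ * Real.sqrt c₄ * f ξ + c₂^2 * c₄) /
          (4 * Real.sqrt c₄ * f ξ - c₃)^4) ∧
    ((∀ ξ, deriv f ξ = (f ξ)^2 - c₂/4) →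
      ∀ ξ, c₃ - 4 * Real.sqrt c₄ * f ξ ≠ 0 →
        (deriv F ξ)^2 = c₂ * (F ξ)^2 + c₃ * (F ξ)^3 + c₄ * (F ξ)^4) := by
  obtain rfl : F = _ := funext hF
  refine (fun defect => ⟨defect, fun hric ξ hQ => ?riccati⟩) fun ξ hQ => ?defect
  case defect =>
    rw [(hasDerivAt_quadratic_div_linear c₂ c₃ _ (hf ξ).hasDerivAt hQ).deriv]
    exact elliptic_defect_eq (Real.sq_sqrt hc₄) (f ξ) (deriv f ξ) hQ
  case riccati =>
    have hzero : _ = (0 : ℝ) := (defect ξ hQ).trans (by rw [hric ξ]; ring)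
    linarith
end

section
/- Let c₀, c₁, c₂ be real constants with c₀ ≥ 0, and let g : ℝ → ℝ be differentiable satisfying the Riccati equation g′ = g² − c₂/4. Define F(ξ) = (c₁ + 4√c₀·g(ξ))/(4g(ξ)² − c₂) on an interval where 4g² − c₂ ≠ 0. Then F satisfies (F′)² = c₀ + c₁F + c₂F². -/
/-! Put `s = √c₀` and `D = 4g² - c₂`, so that the Riccati equation reads `g' = D / 4`. The quotient
rule gives `F' = (s D - 2 g (c₁ + 4 s g)) / D`, and `(F')² = s² + c₁ F + c₂ F²` is then a polynomial
identity in `g` after clearing the denominator `D²`. -/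

noncomputable def riccatiMap (c₁ c₂ s y : ℝ) : ℝ := (c₁ + 4 * s * y) / (4 * y ^ 2 - c₂)

noncomputable def riccatiMapDeriv (c₁ c₂ s y : ℝ) : ℝ :=
  (s * (4 * y ^ 2 - c₂) - 2 * y * (c₁ + 4 * s * y)) / (4 * y ^ 2 - c₂)

theorem sq_riccatiMapDeriv (c₁ c₂ s y : ℝ) (hy : 4 * y ^ 2 - c₂ ≠ 0) :
    riccatiMapDeriv c₁ c₂ s y ^ 2 =
      s ^ 2 + c₁ * riccatiMap c₁ c₂ s y + c₂ * riccatiMap c₁ c₂ s y ^ 2 := by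
  unfold riccatiMapDeriv riccatiMap
  field_simp
  ring

theorem hasDerivAt_riccatiMap_comp {c₁ c₂ s : ℝ} {g : ℝ → ℝ} {x : ℝ}
    (hg : HasDerivAt g (g x ^ 2 - c₂ / 4) x) (hx : 4 * g x ^ 2 - c₂ ≠ 0) :
    HasDerivAt (fun ξ => riccatiMap c₁ c₂ s (g ξ)) (riccatiMapDeriv c₁ c₂ s (g x)) x := by
  have hnum : HasDerivAt (fun ξ => c₁ + 4 * s * g ξ) (4 * s * (g x ^ 2 - c₂ / 4)) x :=
    (hg.const_mul (4 * s)).const_add c₁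
  have hden : HasDerivAt (fun ξ => 4 * g ξ ^ 2 - c₂) (4 * (2 * g x * (g x ^ 2 - c₂ / 4))) x := by
    simpa using ((hg.fun_pow 2).const_mul 4).sub_const c₂
  refine (hnum.fun_div hden hx).congr_deriv ?_
  unfold riccatiMapDeriv
  field_simp

theorem stmt_13 (c₀ c₁ c₂ : ℝ) (hc₀ : 0 ≤ c₀) (g : ℝ → ℝ)
    (hg : Differentiable ℝ g)
    (hric : ∀ ξ, deriv g ξ = (g ξ)^2 - c₂/4)
    (hden : ∀ ξ, 4 * (g ξ)^2 - c₂ ≠ 0) (F : ℝ → ℝ)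
    (hF : ∀ ξ, F ξ = (c₁ + 4 * Real.sqrt c₀ * g ξ) / (4 * (g ξ)^2 - c₂)) :
    ∀ ξ, (deriv F ξ)^2 = c₀ + c₁ * F ξ + c₂ * (F ξ)^2 := by
  intro ξ
  have hFmap : F = fun x => riccatiMap c₁ c₂ (Real.sqrt c₀) (g x) := funext hF
  have hgξ : HasDerivAt g (g ξ ^ 2 - c₂ / 4) ξ := hric ξ ▸ (hg ξ).hasDerivAt
  rw [hFmap, (hasDerivAt_riccatiMap_comp hgξ (hden ξ)).deriv, sq_riccatiMapDeriv _ _ _ _ (hden ξ),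
    Real.sq_sqrt hc₀]
end

section
/- Let c₂ be a real constant and let f_{n−1} : ℝ → ℝ be differentiable satisfying f_{n−1}′ = f_{n−1}² − c₂/4. For any real constant α with 4 + 4α·f_{n−1}(ξ) ≠ 0 on the interval, the function f_n(ξ) = (4f_{n−1}(ξ) + α·c₂)/(4 + 4α·f_{n−1}(ξ)) also satisfies f_n′ = f_n² − c₂/4. -/
/-- On the solution `f = -√k tanh (√k (ξ - ξ₀))` the Möbius map is the addition formula for
`tanh`: it only shifts `ξ₀`. -/
theorem HasDerivAt.riccati_moebius {𝕜 : Type*} [NontriviallyNormedField 𝕜] {f : 𝕜 → 𝕜}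
    {k α x : 𝕜} (hf : HasDerivAt f (f x ^ 2 - k) x) (hden : 1 + α * f x ≠ 0) :
    HasDerivAt (fun y => (f y + α * k) / (1 + α * f y))
      (((f x + α * k) / (1 + α * f x)) ^ 2 - k) x := by
  refine ((hf.add_const (α * k)).fun_div ((hf.const_mul α).const_add 1) hden).congr_deriv ?_
  rw [div_pow, div_sub' (pow_ne_zero 2 hden)]
  ring

theorem stmt_14 (c₂ α : ℝ) (f : ℝ → ℝ) (hf : Differentiable ℝ f)
    (hric : ∀ ξ, deriv f ξ = (f ξ)^2 - c₂/4)
    (hden : ∀ ξ, 4 + 4 * α * f ξ ≠ 0) (fn : ℝ → ℝ)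
    (hfn : ∀ ξ, fn ξ = (4 * f ξ + α * c₂) / (4 + 4 * α * f ξ)) :
    ∀ ξ, deriv fn ξ = (fn ξ)^2 - c₂/4 := by
  have hden' (ξ : ℝ) : 1 + α * f ξ ≠ 0 := by
    intro h
    exact hden ξ (by linear_combination 4 * h)
  have hfn' : fn = fun ξ => (f ξ + α * (c₂ / 4)) / (1 + α * f ξ) := by
    ext ξ
    rw [hfn, div_eq_div_iff (hden ξ) (hden' ξ)]
    ring
  intro ξ
  rw [hfn']
  exact (((hf ξ).hasDerivAt.congr_deriv (hric ξ)).riccati_moebius (hden' ξ)).deriv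
end

section
/- Let c₂ > 0, c₃ ≠ 0 be real with c₃² = 4c₂c₄ (i.e. Δ = 0). Then F(ξ) = −(c₂/c₃)·(1 + tanh((√c₂/2)·ξ)) satisfies (F′)² = c₂F² + c₃F³ + c₄F⁴ for all real ξ. -/
/-!
Writing `t = tanh (√c₂ / 2 · ξ)`, the discriminant condition makes the quartic a perfect square,
`c₂F² + c₃F³ + c₄F⁴ = F² (2c₂ + c₃F)² / (4c₂)`, and for the given `F` one has `2c₂ + c₃F = c₂(1 - t)`.
Since `tanh' = 1 - tanh²`, both sides of the equation become `(c₂/c₃)² · c₂/4 · (1 - t²)²`.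
-/

open Real

theorem Real.hasDerivAt_tanh (x : ℝ) : HasDerivAt tanh (1 - tanh x ^ 2) x := by
  have hcosh : cosh x ≠ 0 := (cosh_pos x).ne'
  rw [show tanh = fun x => sinh x / cosh x from funext tanh_eq_sinh_div_cosh]
  refine ((hasDerivAt_sinh x).div (hasDerivAt_cosh x) hcosh).congr_deriv ?_
  field_simp

theorem hasDerivAt_mul_one_add_tanh_mul (a b x : ℝ) :
    HasDerivAt (fun ξ => b * (1 + tanh (a * ξ))) (b * a * (1 - tanh (a * x) ^ 2)) x := by
  have hinner : HasDerivAt (fun ξ => a * ξ) a x := by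
    simpa using (hasDerivAt_id x).const_mul a
  exact ((((hasDerivAt_tanh (a * x)).comp x hinner).const_add 1).const_mul b).congr_deriv
    (by ring)

theorem quartic_eq_sq_of_discrim_eq_zero {c₂ c₃ c₄ : ℝ} (hc₂ : c₂ ≠ 0)
    (hΔ : c₃ ^ 2 = 4 * c₂ * c₄) (y : ℝ) :
    c₂ * y ^ 2 + c₃ * y ^ 3 + c₄ * y ^ 4 = y ^ 2 * (2 * c₂ + c₃ * y) ^ 2 / (4 * c₂) := by
  field_simp
  linear_combination (-y ^ 4) * hΔ

theorem stmt_16 (c₂ c₃ c₄ : ℝ) (hc₂ : 0 < c₂) (hc₃ : c₃ ≠ 0)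
    (hΔ : c₃^2 = 4 * c₂ * c₄) (F : ℝ → ℝ)
    (hF : ∀ ξ, F ξ = -(c₂/c₃) * (1 + Real.tanh ((Real.sqrt c₂ / 2) * ξ))) :
    ∀ ξ, (deriv F ξ)^2 = c₂ * (F ξ)^2 + c₃ * (F ξ)^3 + c₄ * (F ξ)^4 := by
  intro ξ
  obtain rfl : F = fun ξ => -(c₂/c₃) * (1 + tanh ((√c₂ / 2) * ξ)) := funext hF
  rw [(hasDerivAt_mul_one_add_tanh_mul _ _ ξ).deriv,
    quartic_eq_sq_of_discrim_eq_zero hc₂.ne' hΔ]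
  beta_reduce
  have hsqrt : √c₂ ^ 2 = c₂ := sq_sqrt hc₂.le
  generalize tanh (√c₂ / 2 * ξ) = t
  field_simp
  rw [hsqrt]
  ring
end
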